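/- For an irreducible positive recurrent Markov chain with stationary distribution d, the stationary probability of each state equals the reciprocal of the expected first return time: d(s) = 1 / E[τ⁺(s)], where τ⁺(s) = min{t > 0 : S_t = s, S_0 = s}. -/

import Mathlib

open Finset MeasureTheory
open scoped ENNReal NNReal

namespace Stmt1Aux

open scoped Classical

variable {S : Type*} [Fintype S] [DecidableEq S] [MeasurableSpace S]
    [MeasurableSingletonClass S]

/-- Cylinder set: paths agreeing with `g` up to time `t`. -/
def cylSet (t : ℕ) (g : ℕ → S) : Set (ℕ → S) := {ω | ∀ i ≤ t, ω i = g i}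

lemma measurableSet_cyl (t : ℕ) (g : ℕ → S) : MeasurableSet (cylSet t g) := by
  have h : cylSet t g = ⋂ i, ⋂ (_ : i ≤ t), (fun ω : ℕ → S => ω i) ⁻¹' {g i} := by
    ext ω; simp [cylSet]
  rw [h]
  exact MeasurableSet.iInter fun i => MeasurableSet.iInter fun _ =>
    measurable_pi_apply i (measurableSet_singleton (g i))

/-- Extend a finite path to an infinite one. -/
def extT (t : ℕ) (f : Fin (t+1) → S) : ℕ → S :=
  fun i => f ⟨min i t, Nat.lt_succ_of_le (min_le_right i t)⟩

lemma extT_le (t : ℕ) (f : Fin (t+1) → S) {i : ℕ} (hi : i ≤ t) :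
    extT t f i = f ⟨i, Nat.lt_succ_of_le hi⟩ := by
  unfold extT
  congr 1
  exact Fin.ext (min_eq_left hi)

lemma partition_eq (t : ℕ) (Q : (ℕ → S) → Prop)
    (hQ : ∀ ω ω', (∀ i ≤ t, ω i = ω' i) → Q ω → Q ω') :
    {ω : ℕ → S | Q ω}
      = ⋃ f ∈ Finset.univ.filter (fun f : Fin (t+1) → S => Q (extT t f)),
          cylSet t (extT t f) := by
  ext ω
  simp only [Set.mem_iUnion, Finset.mem_filter, Finset.mem_univ, true_and, Set.mem_setOf_eq]
  constructor
  · intro hω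
    refine ⟨fun i => ω i.val, ?_, ?_⟩
    · exact hQ ω _ (fun i hi => by rw [extT_le t _ hi]) hω
    · intro i hi; rw [extT_le t _ hi]
  · rintro ⟨f, hf, hmem⟩
    exact hQ (extT t f) ω (fun i hi => (hmem i hi).symm) hf

lemma cyl_disjoint (t : ℕ) {f f' : Fin (t+1) → S} (h : f ≠ f') :
    Disjoint (cylSet t (extT t f)) (cylSet t (extT t f')) := by
  rw [Set.disjoint_left]
  intro ω h1 h2
  apply h
  funext i
  have e1 := h1 i.val (Nat.lt_succ_iff.mp i.isLt)
  have e2 := h2 i.val (Nat.lt_succ_iff.mp i.isLt)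
  rw [extT_le t f (Nat.lt_succ_iff.mp i.isLt)] at e1
  rw [extT_le t f' (Nat.lt_succ_iff.mp i.isLt)] at e2
  have := e1.symm.trans e2
  simpa using this

lemma measure_partition (μ : Measure (ℕ → S)) (t : ℕ) (Q : (ℕ → S) → Prop)
    (hQ : ∀ ω ω', (∀ i ≤ t, ω i = ω' i) → Q ω → Q ω') :
    μ {ω | Q ω}
      = ∑ f ∈ Finset.univ.filter (fun f : Fin (t+1) → S => Q (extT t f)),
          μ (cylSet t (extT t f)) := by
  rw [partition_eq t Q hQ]
  refine measure_biUnion_finset ?_ ?_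
  · intro f _ f' _ hne
    exact cyl_disjoint t hne
  · intro f _; exact measurableSet_cyl t _

lemma cylSet_succ (t : ℕ) (g : ℕ → S) :
    cylSet (t+1) g = cylSet t g ∩ {ω | ω (t+1) = g (t+1)} := by
  ext ω
  simp only [cylSet, Set.mem_setOf_eq, Set.mem_inter_iff]
  constructor
  · intro h
    exact ⟨fun i hi => h i (Nat.le_succ_of_le hi), h (t+1) le_rfl⟩
  · rintro ⟨h1, h2⟩ i hi
    rcases Nat.lt_succ_iff_lt_or_eq.mp (Nat.lt_succ_of_le hi) with h | h
    · exact h1 i (Nat.lt_succ_iff.mp h)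
    · subst h; exact h2

lemma cylSet_congr (t : ℕ) {g g' : ℕ → S} (h : ∀ i ≤ t, g i = g' i) :
    cylSet t g = cylSet t g' := by
  ext ω
  simp only [cylSet, Set.mem_setOf_eq]
  exact ⟨fun hω i hi => (hω i hi).trans (h i hi), fun hω i hi => (hω i hi).trans (h i hi).symm⟩

/-- The key one-step Markov decomposition for events depending on coordinates `≤ t`. -/
lemma step_formula (p : S → S → ℝ) (μ : Measure (ℕ → S))
    (hMarkov : ∀ (t : ℕ) (f : ℕ → S),
      μ {ω | ∀ i ≤ t + 1, ω i = f i}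
        = μ {ω | ∀ i ≤ t, ω i = f i} * ENNReal.ofReal (p (f t) (f (t + 1))))
    (t : ℕ) (Q : (ℕ → S) → Prop)
    (hQ : ∀ ω ω', (∀ i ≤ t, ω i = ω' i) → Q ω → Q ω') (w v : S)
    (hQw : ∀ ω, Q ω → ω t = w) :
    μ {ω | Q ω ∧ ω (t+1) = v} = μ {ω | Q ω} * ENNReal.ofReal (p w v) := by
  have hset : {ω | Q ω ∧ ω (t+1) = v}
      = ⋃ f ∈ Finset.univ.filter (fun f : Fin (t+1) → S => Q (extT t f)),
          cylSet (t+1) (Function.update (extT t f) (t+1) v) := by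
    have hbase := partition_eq t Q hQ
    ext ω
    constructor
    · rintro ⟨h1, h2⟩
      have hb : ω ∈ {ω : ℕ → S | Q ω} := h1
      rw [hbase] at hb
      simp only [Set.mem_iUnion] at hb ⊢
      obtain ⟨f, hf, hmem⟩ := hb
      refine ⟨f, hf, ?_⟩
      rw [cylSet_succ, cylSet_congr t (g' := extT t f)
        (fun i hi => Function.update_of_ne (by omega) _ _)]
      exact ⟨hmem, by rw [Function.update_self]; exact h2⟩
    · intro hω
      simp only [Set.mem_iUnion] at hω
      obtain ⟨f, hf, hmem⟩ := hω
      rw [cylSet_succ, cylSet_congr t (g' := extT t f)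
        (fun i hi => Function.update_of_ne (by omega) _ _)] at hmem
      obtain ⟨hmem1, hmem2⟩ := hmem
      constructor
      · have hb : ω ∈ {ω : ℕ → S | Q ω} := by
          rw [hbase]
          simp only [Set.mem_iUnion]
          exact ⟨f, hf, hmem1⟩
        exact hb
      · rw [Set.mem_setOf_eq] at hmem2
        rw [hmem2, Function.update_self]
  rw [hset]
  rw [measure_biUnion_finset]
  · have hterm : ∀ f ∈ Finset.univ.filter (fun f : Fin (t+1) → S => Q (extT t f)),
        μ (cylSet (t+1) (Function.update (extT t f) (t+1) v))
        = μ (cylSet t (extT t f)) * ENNReal.ofReal (p w v) := by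
      intro f hf
      have hm := hMarkov t (Function.update (extT t f) (t+1) v)
      have hft : extT t f t = w := by
        rw [Finset.mem_filter] at hf
        exact hQw _ hf.2
      have e1 : {ω : ℕ → S | ∀ i ≤ t + 1, ω i = Function.update (extT t f) (t+1) v i}
          = cylSet (t+1) (Function.update (extT t f) (t+1) v) := rfl
      have e2 : {ω : ℕ → S | ∀ i ≤ t, ω i = Function.update (extT t f) (t+1) v i}
          = cylSet t (extT t f) := by
        rw [show {ω : ℕ → S | ∀ i ≤ t, ω i = Function.update (extT t f) (t+1) v i}
          = cylSet t (Function.update (extT t f) (t+1) v) from rfl]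
        exact cylSet_congr t (fun i hi => Function.update_of_ne (by omega) _ _)
      rw [e1, e2] at hm
      rw [hm, Function.update_self, Function.update_of_ne (by omega), hft]
    rw [Finset.sum_congr rfl hterm, ← Finset.sum_mul,
      ← measure_partition μ t Q hQ]
  · intro f hf f' hf' hne
    refine Disjoint.mono ?_ ?_ (cyl_disjoint t hne)
    · show cylSet (t+1) (Function.update (extT t f) (t+1) v) ≤ cylSet t (extT t f)
      rw [cylSet_succ, cylSet_congr t (g' := extT t f)
        (fun i hi => Function.update_of_ne (by omega) _ _)]
      exact Set.inter_subset_left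
    · show cylSet (t+1) (Function.update (extT t f') (t+1) v) ≤ cylSet t (extT t f')
      rw [cylSet_succ, cylSet_congr t (g' := extT t f')
        (fun i hi => Function.update_of_ne (by omega) _ _)]
      exact Set.inter_subset_left
  · intro f _
    exact measurableSet_cyl _ _

/-- Uniqueness of the stationary distribution for an irreducible chain. -/
lemma stat_unique (p : S → S → ℝ) (hp0 : ∀ u v, 0 ≤ p u v) (hp1 : ∀ u, ∑ v, p u v = 1)
    (ppow : ℕ → S → S → ℝ)
    (hpow0 : ∀ u v, ppow 0 u v = if u = v then 1 else 0)
    (hpowstep : ∀ t u v, ppow (t + 1) u v = ∑ w, ppow t u w * p w v)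
    (hirr : ∀ u v, ∃ t, 0 < ppow t u v)
    (d e : S → ℝ) (hd1 : ∑ u, d u = 1) (hstatd : ∀ v, ∑ u, d u * p u v = d v)
    (he1 : ∑ u, e u = 1) (hstate : ∀ v, ∑ u, e u * p u v = e v)
    (s : S) : d s = e s := by
  -- nonnegativity of powers
  have hppow0 : ∀ t u v, 0 ≤ ppow t u v := by
    intro t
    induction t with
    | zero => intro u v; rw [hpow0]; positivity
    | succ t ih =>
      intro u v
      rw [hpowstep]
      exact Finset.sum_nonneg fun w _ => mul_nonneg (ih u w) (hp0 w v)
  -- invariance carries over to powers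
  have hinv : ∀ (f : S → ℝ), (∀ v, ∑ u, f u * p u v = f v) →
      ∀ t v, ∑ u, f u * ppow t u v = f v := by
    intro f hf t
    induction t with
    | zero =>
      intro v
      simp only [hpow0, mul_ite, mul_one, mul_zero]
      simp
    | succ t ih =>
      intro v
      have : ∑ u, f u * ppow (t+1) u v = ∑ w, (∑ u, f u * ppow t u w) * p w v := by
        simp only [hpowstep, Finset.mul_sum, Finset.sum_mul]
        rw [Finset.sum_comm]
        congr 1; ext u; congr 1; ext w; ring
      rw [this]
      simp only [ih]
      exact hf v
  set x : S → ℝ := fun v => d v - e v with hx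
  have hxsum : ∑ v, x v = 0 := by
    simp only [hx, Finset.sum_sub_distrib, hd1, he1, sub_self]
  have hxstat : ∀ v, ∑ u, x u * p u v = x v := by
    intro v
    simp only [hx, sub_mul, Finset.sum_sub_distrib, hstatd v, hstate v]
  -- |x| is stationary
  have habs_le : ∀ v, |x v| ≤ ∑ u, |x u| * p u v := by
    intro v
    calc |x v| = |∑ u, x u * p u v| := by rw [hxstat v]
    _ ≤ ∑ u, |x u * p u v| := Finset.abs_sum_le_sum_abs _ _
    _ = ∑ u, |x u| * p u v := by
        refine Finset.sum_congr rfl fun u _ => ?_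
        rw [abs_mul, abs_of_nonneg (hp0 u v)]
  have habs_sum : ∑ v, ∑ u, |x u| * p u v = ∑ v, |x v| := by
    rw [Finset.sum_comm]
    refine Finset.sum_congr rfl fun u _ => ?_
    rw [← Finset.mul_sum, hp1 u, mul_one]
  have habs_stat : ∀ v, ∑ u, |x u| * p u v = |x v| := by
    have hzero : ∑ v, ((∑ u, |x u| * p u v) - |x v|) = 0 := by
      rw [Finset.sum_sub_distrib, habs_sum, sub_self]
    have hnn : ∀ v ∈ Finset.univ, 0 ≤ (∑ u, |x u| * p u v) - |x v| :=
      fun v _ => sub_nonneg.mpr (habs_le v)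
    intro v
    have := (Finset.sum_eq_zero_iff_of_nonneg hnn).mp hzero v (Finset.mem_univ v)
    linarith
  -- positivity transfer along ppow
  have key : ∀ (g : S → ℝ), (∀ v, 0 ≤ g v) → (∀ v, ∑ u, g u * p u v = g v) →
      g s = 0 → ∀ b, g b = 0 := by
    intro g hg0 hgstat hgs b
    by_contra hb
    have hbpos : 0 < g b := lt_of_le_of_ne (hg0 b) (Ne.symm hb)
    obtain ⟨t, ht⟩ := hirr b s
    have hginv := hinv g hgstat t s
    have hge : g b * ppow t b s ≤ ∑ u, g u * ppow t u s :=
      Finset.single_le_sum (fun u _ => mul_nonneg (hg0 u) (hppow0 t u s)) (Finset.mem_univ b)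
    rw [hginv, hgs] at hge
    nlinarith
  -- conclude x s = 0
  have hxs : x s = 0 := by
    rcases lt_trichotomy (x s) 0 with h | h | h
    · -- use z = |x| + x
      set z : S → ℝ := fun v => |x v| + x v with hz
      have hz0 : ∀ v, 0 ≤ z v := fun v => by
        simp only [hz]; have := neg_abs_le (x v); linarith
      have hzstat : ∀ v, ∑ u, z u * p u v = z v := by
        intro v
        simp only [hz, add_mul, Finset.sum_add_distrib, habs_stat v, hxstat v]
      have hzs : z s = 0 := by simp only [hz]; rw [abs_of_neg h]; ring
      -- there is b with x b > 0
      have hex : ∃ b, 0 < x b := by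
        by_contra hc
        push_neg at hc
        have : ∑ v, x v ≤ ∑ v, (if v = s then x s else 0) := by
          refine Finset.sum_le_sum fun v _ => ?_
          by_cases hv : v = s
          · simp [hv]
          · simp [hv, hc v]
        have h2 : ∑ v : S, (if v = s then x s else 0) = x s := by simp
        rw [hxsum, h2] at this
        linarith
      obtain ⟨b, hbpos⟩ := hex
      have : z b = 0 := key z hz0 hzstat hzs b
      simp only [hz] at this
      have : |x b| = -x b := by linarith
      rw [abs_of_pos hbpos] at this
      linarith
    · exact h
    · -- use y = |x| - x
      set y : S → ℝ := fun v => |x v| - x v with hy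
      have hy0 : ∀ v, 0 ≤ y v := fun v => by
        simp only [hy]; have := le_abs_self (x v); linarith
      have hystat : ∀ v, ∑ u, y u * p u v = y v := by
        intro v
        simp only [hy, sub_mul, Finset.sum_sub_distrib, habs_stat v, hxstat v]
      have hys : y s = 0 := by simp only [hy]; rw [abs_of_pos h]; ring
      have hex : ∃ b, x b < 0 := by
        by_contra hc
        push_neg at hc
        have : ∑ v, (if v = s then x s else 0) ≤ ∑ v, x v := by
          refine Finset.sum_le_sum fun v _ => ?_
          by_cases hv : v = s
          · simp [hv]
          · simp [hv, hc v]
        have h2 : ∑ v : S, (if v = s then x s else 0) = x s := by simp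
        rw [hxsum, h2] at this
        linarith
      obtain ⟨b, hbneg⟩ := hex
      have : y b = 0 := key y hy0 hystat hys b
      simp only [hy] at this
      rw [abs_of_neg hbneg] at this
      linarith
  simpa [hx, sub_eq_zero] using hxs

end Stmt1Aux

open Stmt1Aux in
/-- For an irreducible positive recurrent Markov chain, the stationary
probability of each state equals the reciprocal of the expected first return
time: `d(s) = 1 / E[τ⁺(s)]`, where the chain defining `τ⁺(s)` starts at `s`. -/
theorem stmt_1 {S : Type*} [Fintype S] [DecidableEq S] [MeasurableSpace S]
    [MeasurableSingletonClass S]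
    (p : S → S → ℝ)
    (hp0 : ∀ u v, 0 ≤ p u v) (hp1 : ∀ u, ∑ v, p u v = 1)
    -- t-step transition probabilities and irreducibility
    (ppow : ℕ → S → S → ℝ)
    (hpow0 : ∀ u v, ppow 0 u v = if u = v then 1 else 0)
    (hpowstep : ∀ t u v, ppow (t + 1) u v = ∑ w, ppow t u w * p w v)
    (hirr : ∀ u v, ∃ t, 0 < ppow t u v)
    -- stationary distribution
    (d : S → ℝ) (hd0 : ∀ u, 0 ≤ d u) (hd1 : ∑ u, d u = 1)
    (hstat : ∀ v, ∑ u, d u * p u v = d v)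
    (s : S)
    -- path measure of the chain started at s, with transition kernel p
    (μ : Measure (ℕ → S)) [IsProbabilityMeasure μ]
    (hstart : μ {ω | ω 0 = s} = 1)
    (hMarkov : ∀ (t : ℕ) (f : ℕ → S),
      μ {ω | ∀ i ≤ t + 1, ω i = f i}
        = μ {ω | ∀ i ≤ t, ω i = f i} * ENNReal.ofReal (p (f t) (f (t + 1))))
    -- first return time to s, positive recurrence of s
    (τ : (ℕ → S) → ℕ)
    (hτ : ∀ ω, τ ω = sInf {t | 0 < t ∧ ω t = s})
    (hret : ∀ᵐ ω ∂μ, ∃ t, 0 < t ∧ ω t = s)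
    (hint : Integrable (fun ω => (τ ω : ℝ)) μ) :
    d s = 1 / ∫ ω, (τ ω : ℝ) ∂μ := by
  classical
  have hmeas_coord : ∀ (i : ℕ) (v : S), MeasurableSet {ω : ℕ → S | ω i = v} := by
    intro i v
    have h : {ω : ℕ → S | ω i = v} = (fun ω : ℕ → S => ω i) ⁻¹' {v} := by
      ext ω; simp
    rw [h]
    exact measurable_pi_apply i (measurableSet_singleton v)
  -- the "no return through time t" predicate, and the associated partition
  set Qt : ℕ → (ℕ → S) → Prop := fun t ω => ∀ i, 1 ≤ i → i ≤ t → ω i ≠ s with hQtdef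
  set B : ℕ → S → Set (ℕ → S) := fun t w => {ω | Qt t ω ∧ ω t = w} with hBdef
  have hQtinv : ∀ t (ω ω' : ℕ → S), (∀ i ≤ t, ω i = ω' i) → Qt t ω → Qt t ω' := by
    intro t ω ω' hag h i h1 h2
    rw [← hag i h2]; exact h i h1 h2
  have hmeasQt : ∀ t, MeasurableSet {ω : ℕ → S | Qt t ω} := by
    intro t
    have h : {ω : ℕ → S | Qt t ω}
        = ⋂ i, ⋂ (_ : 1 ≤ i), ⋂ (_ : i ≤ t), {ω : ℕ → S | ω i = s}ᶜ := by
      ext ω; simp [hQtdef]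
    rw [h]
    exact MeasurableSet.iInter fun i => MeasurableSet.iInter fun _ =>
      MeasurableSet.iInter fun _ => (hmeas_coord i s).compl
  have hmeasB : ∀ t w, MeasurableSet (B t w) := by
    intro t w
    have h : B t w = {ω : ℕ → S | Qt t ω} ∩ {ω : ℕ → S | ω t = w} := rfl
    rw [h]; exact (hmeasQt t).inter (hmeas_coord t w)
  -- the return event
  set R : Set (ℕ → S) := {ω | ∃ r, 0 < r ∧ ω r = s} with hRdef
  have hmeasR : MeasurableSet R := by
    have h : R = ⋃ r, ⋃ (_ : 0 < r), {ω : ℕ → S | ω r = s} := by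
      ext ω; simp [hRdef]
    rw [h]
    exact MeasurableSet.iUnion fun r => MeasurableSet.iUnion fun _ => hmeas_coord r s
  have hRc : μ Rᶜ = 0 := by
    have h : Rᶜ = {ω : ℕ → S | ¬ ∃ r, 0 < r ∧ ω r = s} := by ext ω; simp [hRdef]
    rw [h]; exact hret
  have hR1 : μ R = 1 := (prob_compl_eq_zero_iff hmeasR).mp hRc
  -- characterizations of the return time
  have hτgt : ∀ t, {ω : ℕ → S | t < τ ω} = {ω | Qt t ω} ∩ R := by
    intro t; ext ω
    simp only [Set.mem_setOf_eq, Set.mem_inter_iff]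
    rw [hτ ω]
    constructor
    · intro h
      have hne : {r | 0 < r ∧ ω r = s}.Nonempty := by
        by_contra hc
        rw [Set.not_nonempty_iff_eq_empty] at hc
        rw [hc, Nat.sInf_empty] at h; omega
      refine ⟨?_, hne⟩
      intro i h1 h2 his
      have hle : sInf {r | 0 < r ∧ ω r = s} ≤ i := Nat.sInf_le ⟨by omega, his⟩
      omega
    · rintro ⟨hq, hr⟩
      have hne : {r | 0 < r ∧ ω r = s}.Nonempty := hr
      have hmem := Nat.sInf_mem hne
      by_contra hc
      push_neg at hc
      exact hq _ hmem.1 hc hmem.2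
  have hτeq1 : ∀ t, {ω : ℕ → S | τ ω = t + 1} = {ω | Qt t ω ∧ ω (t+1) = s} := by
    intro t; ext ω
    simp only [Set.mem_setOf_eq]
    rw [hτ ω]
    constructor
    · intro h
      have hne : {r | 0 < r ∧ ω r = s}.Nonempty := by
        by_contra hc
        rw [Set.not_nonempty_iff_eq_empty] at hc
        rw [hc, Nat.sInf_empty] at h; omega
      have hmem := Nat.sInf_mem hne
      rw [h] at hmem
      refine ⟨?_, hmem.2⟩
      intro i h1 h2 his
      have hle : sInf {r | 0 < r ∧ ω r = s} ≤ i := Nat.sInf_le ⟨by omega, his⟩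
      omega
    · rintro ⟨hq, hs'⟩
      have hne : {r | 0 < r ∧ ω r = s}.Nonempty := ⟨t+1, by omega, hs'⟩
      have hmem := Nat.sInf_mem hne
      have hle : sInf {r | 0 < r ∧ ω r = s} ≤ t + 1 := Nat.sInf_le ⟨by omega, hs'⟩
      rcases Nat.lt_or_ge (sInf {r | 0 < r ∧ ω r = s}) (t+1) with hlt | hge
      · exact absurd hmem.2 (hq _ hmem.1 (by omega))
      · omega
  -- partition of {Qt t} according to the position at time t
  have hQtpart : ∀ t, μ {ω : ℕ → S | Qt t ω} = ∑ w, μ (B t w) := by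
    intro t
    have h : {ω : ℕ → S | Qt t ω} = ⋃ w ∈ (Finset.univ : Finset S), B t w := by
      ext ω
      simp only [Set.mem_iUnion, Finset.mem_univ, Set.mem_setOf_eq, true_and, hBdef]
      exact ⟨fun h => ⟨ω t, trivial, h, rfl⟩, fun ⟨w, _, h1, _⟩ => h1⟩
    rw [h, measure_biUnion_finset]
    · intro w _ w' _ hne
      refine Set.disjoint_left.mpr ?_
      rintro ω ⟨_, e1⟩ ⟨_, e2⟩
      exact hne (e1.symm.trans e2)
    · intro w _; exact hmeasB t w
  -- the one-step decomposition
  have hsplit : ∀ (t : ℕ) (v : S), μ {ω : ℕ → S | Qt t ω ∧ ω (t+1) = v}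
      = ∑ w, μ (B t w) * ENNReal.ofReal (p w v) := by
    intro t v
    have h : {ω : ℕ → S | Qt t ω ∧ ω (t+1) = v}
        = ⋃ w ∈ (Finset.univ : Finset S),
            {ω : ℕ → S | (Qt t ω ∧ ω t = w) ∧ ω (t+1) = v} := by
      ext ω
      simp only [Set.mem_iUnion, Finset.mem_univ, Set.mem_setOf_eq, true_and]
      constructor
      · rintro ⟨h1, h2⟩; exact ⟨ω t, trivial, ⟨h1, rfl⟩, h2⟩
      · rintro ⟨w, _, ⟨h1, _⟩, h2⟩; exact ⟨h1, h2⟩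
    rw [h, measure_biUnion_finset]
    · refine Finset.sum_congr rfl fun w _ => ?_
      have hstep := step_formula p μ hMarkov t (fun ω => Qt t ω ∧ ω t = w)
        (fun ω ω' hag hh => ⟨hQtinv t ω ω' hag hh.1, (hag t le_rfl).symm.trans hh.2⟩)
        w v (fun ω hh => hh.2)
      exact hstep
    · intro w _ w' _ hne
      refine Set.disjoint_left.mpr ?_
      rintro ω ⟨⟨_, e1⟩, _⟩ ⟨⟨_, e2⟩, _⟩
      exact hne (e1.symm.trans e2)
    · intro w _
      have h2 : {ω : ℕ → S | (Qt t ω ∧ ω t = w) ∧ ω (t+1) = v}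
          = B t w ∩ {ω : ℕ → S | ω (t+1) = v} := rfl
      rw [h2]; exact (hmeasB t w).inter (hmeas_coord (t+1) v)
  -- base case
  have hB0 : ∀ v, μ (B 0 v) = if v = s then 1 else 0 := by
    intro v
    have h : B 0 v = {ω : ℕ → S | ω 0 = v} := by
      ext ω
      simp only [hBdef, Set.mem_setOf_eq, hQtdef]
      exact ⟨fun hh => hh.2, fun hh => ⟨fun i h1 h2 => by omega, hh⟩⟩
    rw [h]
    by_cases hv : v = s
    · subst hv; simp [hstart]
    · simp only [hv, if_false]
      refine measure_mono_null ?_ ((prob_compl_eq_zero_iff (hmeas_coord 0 s)).mpr hstart)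
      intro ω hω
      simp only [Set.mem_setOf_eq] at hω
      simp only [Set.mem_compl_iff, Set.mem_setOf_eq]
      rw [hω]; exact hv
  -- recursion for B
  have hBrec : ∀ t v, v ≠ s →
      μ (B (t+1) v) = ∑ w, μ (B t w) * ENNReal.ofReal (p w v) := by
    intro t v hv
    have h : B (t+1) v = {ω : ℕ → S | Qt t ω ∧ ω (t+1) = v} := by
      ext ω
      simp only [hBdef, Set.mem_setOf_eq, hQtdef]
      constructor
      · rintro ⟨h1, h2⟩
        exact ⟨fun i hi1 hi2 => h1 i hi1 (by omega), h2⟩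
      · rintro ⟨h1, h2⟩
        refine ⟨fun i hi1 hi2 => ?_, h2⟩
        rcases Nat.lt_or_ge i (t+1) with hlt | hge
        · exact h1 i hi1 (by omega)
        · have : i = t + 1 := by omega
          subst this
          rw [h2]; exact hv
    rw [h]; exact hsplit t v
  -- recursion for the law of τ
  have hτrec : ∀ t, μ {ω : ℕ → S | τ ω = t + 1}
      = ∑ w, μ (B t w) * ENNReal.ofReal (p w s) := by
    intro t
    rw [hτeq1 t]; exact hsplit t s
  -- total mass of the law of τ on positive values
  have hτtotal : ∑' t : ℕ, μ {ω : ℕ → S | τ ω = t + 1} = 1 := by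
    have hU : (⋃ t : ℕ, {ω : ℕ → S | τ ω = t + 1}) = R := by
      ext ω
      simp only [Set.mem_iUnion, Set.mem_setOf_eq]
      constructor
      · rintro ⟨t, ht⟩
        have := hτeq1 t
        have hω : ω ∈ {ω : ℕ → S | τ ω = t + 1} := ht
        rw [this] at hω
        exact ⟨t+1, by omega, hω.2⟩
      · intro hr
        have hne : {r | 0 < r ∧ ω r = s}.Nonempty := hr
        have hmem := Nat.sInf_mem hne
        have hpos : 0 < τ ω := by rw [hτ ω]; exact hmem.1
        exact ⟨τ ω - 1, by omega⟩
    have hdisj : Pairwise (Function.onFun Disjoint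
        (fun t : ℕ => {ω : ℕ → S | τ ω = t + 1})) := by
      intro t t' hne
      rw [Function.onFun, Set.disjoint_left]
      rintro ω h1 h2
      simp only [Set.mem_setOf_eq] at h1 h2
      omega
    have hmeasτ : ∀ t : ℕ, MeasurableSet {ω : ℕ → S | τ ω = t + 1} := by
      intro t
      rw [hτeq1 t]
      have h2 : {ω : ℕ → S | Qt t ω ∧ ω (t+1) = s}
          = {ω : ℕ → S | Qt t ω} ∩ {ω : ℕ → S | ω (t+1) = s} := rfl
      rw [h2]; exact (hmeasQt t).inter (hmeas_coord (t+1) s)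
    rw [← measure_iUnion hdisj hmeasτ, hU, hR1]
  -- the tail probabilities
  have hmeasgt : ∀ t, MeasurableSet {ω : ℕ → S | t < τ ω} := by
    intro t; rw [hτgt t]; exact (hmeasQt t).inter hmeasR
  have hgt : ∀ t, μ {ω : ℕ → S | t < τ ω} = ∑ w, μ (B t w) := by
    intro t
    rw [hτgt t, measure_inter_conull hRc, hQtpart t]
  -- the expected return time as a sum of tail probabilities
  have hAr : ∫⁻ ω, (τ ω : ℝ≥0∞) ∂μ = ∑' t : ℕ, μ {ω : ℕ → S | t < τ ω} := by
    have hpt : ∀ ω : ℕ → S, ((τ ω : ℕ) : ℝ≥0∞)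
        = ∑' t : ℕ, Set.indicator {ω' : ℕ → S | t < τ ω'} (fun _ => (1:ℝ≥0∞)) ω := by
      intro ω
      symm
      have h1 : ∀ t ∉ Finset.range (τ ω),
          Set.indicator {ω' : ℕ → S | t < τ ω'} (fun _ => (1:ℝ≥0∞)) ω = 0 := by
        intro t ht
        refine Set.indicator_of_notMem ?_ _
        simp only [Set.mem_setOf_eq]
        rw [Finset.mem_range] at ht
        omega
      rw [tsum_eq_sum h1]
      have h2 : ∀ t ∈ Finset.range (τ ω),
          Set.indicator {ω' : ℕ → S | t < τ ω'} (fun _ => (1:ℝ≥0∞)) ω = 1 := by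
        intro t ht
        exact Set.indicator_of_mem (Finset.mem_range.mp ht) (fun _ => (1:ℝ≥0∞))
      rw [Finset.sum_congr rfl h2, Finset.sum_const, Finset.card_range, nsmul_eq_mul, mul_one]
    calc ∫⁻ ω, (τ ω : ℝ≥0∞) ∂μ
        = ∫⁻ ω, ∑' t : ℕ, Set.indicator {ω' : ℕ → S | t < τ ω'} (fun _ => (1:ℝ≥0∞)) ω ∂μ :=
          lintegral_congr hpt
      _ = ∑' t : ℕ, ∫⁻ ω, Set.indicator {ω' : ℕ → S | t < τ ω'} (fun _ => (1:ℝ≥0∞)) ω ∂μ :=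
          lintegral_tsum (fun t => (measurable_const.indicator (hmeasgt t)).aemeasurable)
      _ = ∑' t : ℕ, μ {ω : ℕ → S | t < τ ω} := by
          refine tsum_congr fun t => ?_
          rw [lintegral_indicator (hmeasgt t), setLIntegral_one]
  have hfinAr : ∫⁻ ω, (τ ω : ℝ≥0∞) ∂μ ≠ ⊤ := by
    have h2 : ∫⁻ ω, (‖(τ ω : ℝ)‖₊ : ℝ≥0∞) ∂μ < ⊤ := hint.hasFiniteIntegral
    have h3 : ∀ ω : ℕ → S, ((τ ω : ℕ) : ℝ≥0∞) = (‖(τ ω : ℝ)‖₊ : ℝ≥0∞) := by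
      intro ω; simp
    rw [lintegral_congr h3]
    exact h2.ne
  -- the expectation as a real number
  have hEτ : ∫ ω, (τ ω : ℝ) ∂μ = (∫⁻ ω, (τ ω : ℝ≥0∞) ∂μ).toReal := by
    rw [integral_eq_lintegral_of_nonneg_ae
      (Filter.Eventually.of_forall fun ω => by positivity) hint.aestronglyMeasurable]
    congr 1
    exact lintegral_congr fun ω => by rw [ENNReal.ofReal_natCast]
  -- the occupation measure
  set σ' : S → ℝ≥0∞ := fun w => ∑' t : ℕ, μ (B t w) with hσ'def
  have hσ'tot : ∑ w, σ' w = ∫⁻ ω, (τ ω : ℝ≥0∞) ∂μ := by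
    rw [hAr]
    simp only [hσ'def]
    calc ∑ w, ∑' t : ℕ, μ (B t w) = ∑' t : ℕ, ∑ w, μ (B t w) :=
        (Summable.tsum_finsetSum (fun (w : S) (_ : w ∈ Finset.univ) => ENNReal.summable)).symm
      _ = ∑' t : ℕ, μ {ω : ℕ → S | t < τ ω} := tsum_congr fun t => (hgt t).symm
  have hσ'fin : ∀ w, σ' w ≠ ⊤ := by
    intro w
    have htot_ne : (∑ w, σ' w) ≠ ⊤ := by rw [hσ'tot]; exact hfinAr
    exact ne_top_of_le_ne_top htot_ne
      (Finset.single_le_sum (fun w' _ => zero_le) (Finset.mem_univ w))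
  have hσ's : σ' s = 1 := by
    have hzero : ∀ (t : ℕ), t ≠ 0 → μ (B t s) = 0 := by
      intro t ht
      obtain ⟨k, rfl⟩ := Nat.exists_eq_succ_of_ne_zero ht
      have h : B (k+1) s = ∅ := by
        rw [Set.eq_empty_iff_forall_notMem]
        rintro ω ⟨h1, h2⟩
        exact h1 (k+1) (by omega) le_rfl h2
      rw [h, measure_empty]
    have h0 : σ' s = μ (B 0 s) := tsum_eq_single 0 (fun t ht => hzero t ht)
    rw [h0, hB0 s, if_pos rfl]
  -- stationarity of the occupation measure, in ℝ≥0∞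
  have hσ'stat : ∀ v, ∑ w, σ' w * ENNReal.ofReal (p w v) = σ' v := by
    intro v
    have hlhs : ∑ w, σ' w * ENNReal.ofReal (p w v)
        = ∑' t : ℕ, ∑ w, μ (B t w) * ENNReal.ofReal (p w v) := by
      have h1 : ∀ w : S, σ' w * ENNReal.ofReal (p w v)
          = ∑' t : ℕ, μ (B t w) * ENNReal.ofReal (p w v) := fun w =>
        (ENNReal.tsum_mul_right).symm
      rw [Finset.sum_congr rfl fun w _ => h1 w]
      exact (Summable.tsum_finsetSum (fun (w : S) (_ : w ∈ Finset.univ) => ENNReal.summable)).symm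
    rw [hlhs]
    by_cases hv : v = s
    · rw [hv]
      have h2 : ∀ t : ℕ, ∑ w, μ (B t w) * ENNReal.ofReal (p w s)
          = μ {ω : ℕ → S | τ ω = t + 1} := fun t => (hτrec t).symm
      rw [tsum_congr h2, hτtotal, hσ's]
    · have h2 : ∀ t : ℕ, ∑ w, μ (B t w) * ENNReal.ofReal (p w v)
          = μ (B (t+1) v) := fun t => (hBrec t v hv).symm
      rw [tsum_congr h2]
      have h3 : σ' v = μ (B 0 v) + ∑' t : ℕ, μ (B (t+1) v) := by
        simp only [hσ'def]
        exact tsum_eq_zero_add' ENNReal.summable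
      rw [h3, hB0 v, if_neg hv, zero_add]
  -- pass to real numbers
  set E : ℝ := (∫⁻ ω, (τ ω : ℝ≥0∞) ∂μ).toReal with hEdef
  set σr : S → ℝ := fun w => (σ' w).toReal with hσrdef
  have hσrtot : ∑ w, σr w = E := by
    rw [hEdef, ← hσ'tot, ENNReal.toReal_sum (fun w _ => hσ'fin w)]
  have hEpos : 0 < E := by
    rw [hEdef]
    refine ENNReal.toReal_pos ?_ hfinAr
    intro hc
    rw [← hσ'tot] at hc
    have h1 : σ' s ≤ ∑ w, σ' w :=
      Finset.single_le_sum (fun w' _ => zero_le) (Finset.mem_univ s)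
    rw [hc, hσ's] at h1
    simp at h1
  have hσrstat : ∀ v, ∑ w, σr w * p w v = σr v := by
    intro v
    have h := congrArg ENNReal.toReal (hσ'stat v)
    rw [ENNReal.toReal_sum (fun w _ =>
      ENNReal.mul_ne_top (hσ'fin w) ENNReal.ofReal_ne_top)] at h
    simpa [hσrdef, ENNReal.toReal_mul, ENNReal.toReal_ofReal (hp0 _ v)] using h
  -- the normalized occupation measure is a stationary distribution
  set e : S → ℝ := fun w => σr w / E with hedef
  have he1 : ∑ w, e w = 1 := by
    rw [hedef, ← Finset.sum_div, hσrtot, div_self (ne_of_gt hEpos)]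
  have hestat : ∀ v, ∑ w, e w * p w v = e v := by
    intro v
    show ∑ w, σr w / E * p w v = σr v / E
    calc ∑ w, σr w / E * p w v = ∑ w, σr w * p w v / E :=
          Finset.sum_congr rfl fun w _ => by ring
      _ = (∑ w, σr w * p w v) / E := by rw [← Finset.sum_div]
      _ = σr v / E := by rw [hσrstat v]
  have hds : d s = e s :=
    stat_unique p hp0 hp1 ppow hpow0 hpowstep hirr d e hd1 hstat he1 hestat s
  have hσrs : σr s = 1 := by simp only [hσrdef]; rw [hσ's]; simp
  rw [hds, hEτ]
  show σr s / E = 1 / E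
  rw [hσrs]
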